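/- A Bell decomposable state with parameters (t₁,t₂,t₃) has positive partial transpose if and only if in addition to the positivity conditions one has 1+t₁+t₂+t₃ ≥ 0, 1−t₁−t₂+t₃ ≥ 0, 1+t₁−t₂−t₃ ≥ 0, and 1−t₁+t₂−t₃ ≥ 0. -/

import Mathlib

/-!
Partial transposition of the second factor maps `A ⊗ B` to `A ⊗ Bᵀ`; since `σ₁` and `σ₃` are
symmetric while `σ₂ᵀ = -σ₂`, it sends the Bell decomposable state with parameters `(t₁, t₂, t₃)`
to the one with parameters `(t₁, -t₂, t₃)`. A Bell decomposable state is diagonal in the Bell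
basis, with eigenvalues `(1 + t₁ - t₂ + t₃)/4`, `(1 - t₁ + t₂ + t₃)/4`, `(1 + t₁ + t₂ - t₃)/4`,
`(1 - t₁ - t₂ - t₃)/4`, so it is positive semidefinite exactly when these are nonnegative.
Substituting `-t₂` for `t₂` gives the four inequalities.
-/

open Matrix Kronecker Complex BigOperators

noncomputable section

def σ1 : Matrix (Fin 2) (Fin 2) ℂ := !![0, 1; 1, 0]
def σ2 : Matrix (Fin 2) (Fin 2) ℂ := !![0, -Complex.I; Complex.I, 0]
def σ3 : Matrix (Fin 2) (Fin 2) ℂ := !![1, 0; 0, -1]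

/-- Bell decomposable state on C²⊗C², indexed by product indices. -/
def ρBDk (t1 t2 t3 : ℝ) : Matrix (Fin 2 × Fin 2) (Fin 2 × Fin 2) ℂ :=
  (1/4 : ℂ) • ((1 : Matrix (Fin 2 × Fin 2) (Fin 2 × Fin 2) ℂ)
    + (t1 : ℂ) • (σ1 ⊗ₖ σ1) + (t2 : ℂ) • (σ2 ⊗ₖ σ2) + (t3 : ℂ) • (σ3 ⊗ₖ σ3))

/-- Partial transpose with respect to the second tensor factor:
each 2×2 block Bᵢⱼ of Σ Aᵢⱼ ⊗ Bᵢⱼ is replaced by its transpose. -/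
def ptB (M : Matrix (Fin 2 × Fin 2) (Fin 2 × Fin 2) ℂ) :
    Matrix (Fin 2 × Fin 2) (Fin 2 × Fin 2) ℂ :=
  fun p q => M (p.1, q.2) (q.1, p.2)

namespace Matrix

variable {ι n 𝕜 : Type*} [Fintype ι] [Fintype n] [RCLike 𝕜]

open scoped ComplexOrder

theorem dotProduct_sum_smul_vecMulVec_of_orthogonal {v : ι → n → 𝕜}
    (horth : Pairwise fun i j ↦ star (v i) ⬝ᵥ v j = 0) (c : ι → ℝ) (i : ι) :
    star (v i) ⬝ᵥ ((∑ j, c j • vecMulVec (v j) (star (v j))) *ᵥ v i)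
      = c i • (star (v i) ⬝ᵥ v i) ^ 2 := by
  rw [sum_mulVec, dotProduct_sum, Finset.sum_eq_single i]
  · simp [smul_mulVec, vecMulVec_mulVec, dotProduct_smul, sq]
  · intro j _ hji
    simp [smul_mulVec, vecMulVec_mulVec, horth hji]
  · simp

theorem posSemidef_sum_smul_vecMulVec_iff {v : ι → n → 𝕜}
    (horth : Pairwise fun i j ↦ star (v i) ⬝ᵥ v j = 0) (hv : ∀ i, v i ≠ 0) (c : ι → ℝ) :
    (∑ i, c i • vecMulVec (v i) (star (v i))).PosSemidef ↔ ∀ i, 0 ≤ c i := by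
  refine ⟨fun hM i ↦ ?_, fun hc ↦ posSemidef_sum _ fun i _ ↦
    (posSemidef_vecMulVec_self_star (v i)).smul (hc i)⟩
  have hq := hM.dotProduct_mulVec_nonneg (v i)
  rw [dotProduct_sum_smul_vecMulVec_of_orthogonal horth] at hq
  obtain ⟨r, hr, hrq⟩ := RCLike.pos_iff_exists_ofReal.1
    (pow_pos (dotProduct_star_self_pos_iff.2 (hv i)) 2)
  rw [← hrq, RCLike.real_smul_eq_coe_mul, ← RCLike.ofReal_mul, RCLike.ofReal_nonneg] at hq
  exact nonneg_of_mul_nonneg_left hq hr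

end Matrix

theorem ptB_add (M N : Matrix (Fin 2 × Fin 2) (Fin 2 × Fin 2) ℂ) :
    ptB (M + N) = ptB M + ptB N := rfl

theorem ptB_smul (c : ℂ) (M : Matrix (Fin 2 × Fin 2) (Fin 2 × Fin 2) ℂ) :
    ptB (c • M) = c • ptB M := rfl

theorem ptB_kronecker (A B : Matrix (Fin 2) (Fin 2) ℂ) : ptB (A ⊗ₖ B) = A ⊗ₖ Bᵀ := rfl

theorem ptB_one : ptB 1 = 1 := by
  rw [← one_kronecker_one, ptB_kronecker, transpose_one]

theorem transpose_σ1 : σ1ᵀ = σ1 := by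
  ext i j; fin_cases i <;> fin_cases j <;> rfl

theorem transpose_σ2 : σ2ᵀ = -σ2 := by
  ext i j; fin_cases i <;> fin_cases j <;> simp [σ2]

theorem transpose_σ3 : σ3ᵀ = σ3 := by
  ext i j; fin_cases i <;> fin_cases j <;> simp [σ3]

theorem ptB_ρBDk (t1 t2 t3 : ℝ) : ptB (ρBDk t1 t2 t3) = ρBDk t1 (-t2) t3 := by
  simp only [ρBDk, ptB_add, ptB_smul, ptB_one, ptB_kronecker, transpose_σ1, transpose_σ2,
    transpose_σ3, ← neg_one_smul ℂ σ2, kronecker_smul, smul_smul]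
  push_cast
  rw [mul_neg_one]

-- The unnormalized Bell vectors Φ⁺, Φ⁻, Ψ⁺, Ψ⁻; the amplitude of |ij⟩ sits in row i, column j.
def bellVec (k : Fin 4) (p : Fin 2 × Fin 2) : ℂ :=
  ![!![1, 0; 0, 1], !![1, 0; 0, -1], !![0, 1; 1, 0], !![0, 1; -1, 0]] k p.1 p.2

def bellWeight (t1 t2 t3 : ℝ) : Fin 4 → ℝ :=
  ![1 + t1 - t2 + t3, 1 - t1 + t2 + t3, 1 + t1 + t2 - t3, 1 - t1 - t2 - t3]

theorem bellVec_orthogonal : Pairwise fun i j ↦ star (bellVec i) ⬝ᵥ bellVec j = 0 := by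
  intro i j hij
  fin_cases i <;> fin_cases j <;> simp_all [bellVec, dotProduct, Fintype.sum_prod_type]

theorem bellVec_ne_zero (k : Fin 4) : bellVec k ≠ 0 := by
  intro h
  fin_cases k <;> simpa [bellVec] using congrArg (fun v ↦ v (0, 0) + v (0, 1)) h

theorem ρBDk_eq_sum_bellVec (t1 t2 t3 : ℝ) :
    ρBDk t1 t2 t3 =
      ∑ k, (bellWeight t1 t2 t3 k / 8) • vecMulVec (bellVec k) (star (bellVec k)) := by
  ext ⟨i, j⟩ ⟨k, l⟩
  fin_cases i <;> fin_cases j <;> fin_cases k <;> fin_cases l <;>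
    simp [ρBDk, σ1, σ2, σ3, bellVec, bellWeight, Fin.sum_univ_four, vecMulVec_apply] <;> ring

open scoped ComplexOrder in
theorem posSemidef_ρBDk_iff (t1 t2 t3 : ℝ) :
    (ρBDk t1 t2 t3).PosSemidef ↔
      0 ≤ 1 + t1 - t2 + t3 ∧ 0 ≤ 1 - t1 + t2 + t3 ∧
      0 ≤ 1 + t1 + t2 - t3 ∧ 0 ≤ 1 - t1 - t2 - t3 := by
  rw [ρBDk_eq_sum_bellVec, posSemidef_sum_smul_vecMulVec_iff bellVec_orthogonal bellVec_ne_zero]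
  simp [Fin.forall_fin_succ, bellWeight, le_div_iff₀]

open scoped ComplexOrder in
theorem bd_ppt_iff_general (t1 t2 t3 : ℝ) :
    (ptB (ρBDk t1 t2 t3)).PosSemidef ↔
      0 ≤ 1 + t1 + t2 + t3 ∧ 0 ≤ 1 - t1 - t2 + t3 ∧
      0 ≤ 1 + t1 - t2 - t3 ∧ 0 ≤ 1 - t1 + t2 - t3 := by
  rw [ptB_ρBDk, posSemidef_ρBDk_iff]
  simp only [sub_neg_eq_add, ← sub_eq_add_neg]

open scoped ComplexOrder in
/-- a Bell decomposable state has positive partial transpose iff the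
four octahedron inequalities hold (in addition to the positivity conditions). -/
theorem bd_ppt_iff (t1 t2 t3 : ℝ)
    (h1 : 0 ≤ 1 + t1 - t2 + t3) (h2 : 0 ≤ 1 - t1 + t2 + t3)
    (h3 : 0 ≤ 1 + t1 + t2 - t3) (h4 : 0 ≤ 1 - t1 - t2 - t3) :
    (ptB (ρBDk t1 t2 t3)).PosSemidef ↔
      0 ≤ 1 + t1 + t2 + t3 ∧ 0 ≤ 1 - t1 - t2 + t3 ∧
      0 ≤ 1 + t1 - t2 - t3 ∧ 0 ≤ 1 - t1 + t2 - t3 :=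
  bd_ppt_iff_general t1 t2 t3

end
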